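/- The set of all real matrices of arbitrary (finite, positive) dimensions with the semi-tensor product ⋉ forms a monoid, with identity element the 1×1 matrix [1]. -/

import Mathlib

/-!
Kronecker product with an identity is multiplicative, `(X * Y) ⊗ I_s = (X ⊗ I_s)(Y ⊗ I_s)`,
and composes, `(X ⊗ I_s) ⊗ I_t = X ⊗ I_{st}`. Hence both `(A ⋉ B) ⋉ C` and `A ⋉ (B ⋉ C)`
expand to a product `(A ⊗ I_a)(B ⊗ I_b)(C ⊗ I_c)` with `n a = p b` and `q b = u c`, which is
determined by `b`. In both bracketings `p b = lcm(n, p · lcm(q, u) / q)`, so they agree.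
For the unit, `[1] ⊗ I_s = I_s` and the other factor gets scaled by `I_1`.
-/

open Matrix Kronecker

noncomputable section

/-- `A ⊗ I_s`, reindexed to `Fin (m*s) × Fin (n*s)` index types. -/
def mkron {m n : ℕ} (A : Matrix (Fin m) (Fin n) ℝ) (s : ℕ) :
    Matrix (Fin (m * s)) (Fin (n * s)) ℝ :=
  Matrix.reindex finProdFinEquiv finProdFinEquiv
    (Matrix.kroneckerMap (· * ·) A (1 : Matrix (Fin s) (Fin s) ℝ))

/-- `x ⊗ 1_s`: each entry of `x` repeated `s` times (Kronecker with the all-ones vector). -/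
def vkron {r : ℕ} (x : Fin r → ℝ) (s : ℕ) : Fin (r * s) → ℝ :=
  fun i => x (finProdFinEquiv.symm i).1

/-- The semi-tensor (M-) product `A ⋉ B = (A ⊗ I_{t/n})(B ⊗ I_{t/p})`, `t = lcm n p`. -/
def stp {m n p q : ℕ} (A : Matrix (Fin m) (Fin n) ℝ) (B : Matrix (Fin p) (Fin q) ℝ) :
    Matrix (Fin (m * (Nat.lcm n p / n))) (Fin (q * (Nat.lcm n p / p))) ℝ :=
  mkron A (Nat.lcm n p / n) *
    (mkron B (Nat.lcm n p / p)).submatrix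
      (Fin.cast (by
        rw [Nat.mul_div_cancel' (Nat.dvd_lcm_left n p),
          Nat.mul_div_cancel' (Nat.dvd_lcm_right n p)])) id

/-- The vector (V-) product `A ⋉_V x = (A ⊗ I_{t/n})(x ⊗ 1_{t/r})`, `t = lcm n r`. -/
def vprod {m n r : ℕ} (A : Matrix (Fin m) (Fin n) ℝ) (x : Fin r → ℝ) :
    Fin (m * (Nat.lcm n r / n)) → ℝ :=
  (mkron A (Nat.lcm n r / n)).mulVec fun j =>
    vkron x (Nat.lcm n r / r)
      (Fin.cast (by
        rw [Nat.mul_div_cancel' (Nat.dvd_lcm_left n r),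
          Nat.mul_div_cancel' (Nat.dvd_lcm_right n r)]) j)

/-- V-addition `x ⊞ y = (x ⊗ 1_{t/m}) + (y ⊗ 1_{t/n})`, `t = lcm m n`. -/
def vadd2 {m n : ℕ} (x : Fin m → ℝ) (y : Fin n → ℝ) : Fin (Nat.lcm m n) → ℝ :=
  fun i =>
    vkron x (Nat.lcm m n / m) (Fin.cast (Nat.mul_div_cancel' (Nat.dvd_lcm_left m n)).symm i) +
    vkron y (Nat.lcm m n / n) (Fin.cast (Nat.mul_div_cancel' (Nat.dvd_lcm_right m n)).symm i)

/-- V-subtraction `x ⊟ y = (x ⊗ 1_{t/m}) - (y ⊗ 1_{t/n})`, `t = lcm m n`. -/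
def vsub2 {m n : ℕ} (x : Fin m → ℝ) (y : Fin n → ℝ) : Fin (Nat.lcm m n) → ℝ :=
  fun i =>
    vkron x (Nat.lcm m n / m) (Fin.cast (Nat.mul_div_cancel' (Nat.dvd_lcm_left m n)).symm i) -
    vkron y (Nat.lcm m n / n) (Fin.cast (Nat.mul_div_cancel' (Nat.dvd_lcm_right m n)).symm i)

/-- The dimension-normalized norm `‖x‖_V = sqrt((1/k) ∑ xᵢ²)`. -/
def vnorm {k : ℕ} (x : Fin k → ℝ) : ℝ :=
  Real.sqrt ((∑ i, x i ^ 2) / k)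

/-- The dimension-free inner product `⟨x,y⟩_V = (1/t)⟨x⊗1_{t/m}, y⊗1_{t/n}⟩`. -/
def vinner {m n : ℕ} (x : Fin m → ℝ) (y : Fin n → ℝ) : ℝ :=
  (∑ i : Fin (Nat.lcm m n),
      vkron x (Nat.lcm m n / m) (Fin.cast (Nat.mul_div_cancel' (Nat.dvd_lcm_left m n)).symm i) *
      vkron y (Nat.lcm m n / n)
        (Fin.cast (Nat.mul_div_cancel' (Nat.dvd_lcm_right m n)).symm i)) /
    (Nat.lcm m n)

/-- The dimension-free distance `d(x,y) = ‖x ⊟ y‖_V`. -/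
def vdist {m n : ℕ} (x : Fin m → ℝ) (y : Fin n → ℝ) : ℝ := vnorm (vsub2 x y)

/-- The spectral norm `‖A‖ = sqrt(σ_max(AᵀA))` (largest eigenvalue of `AᵀA = AᴴA` over `ℝ`). -/
def specNorm {m n : ℕ} (A : Matrix (Fin m) (Fin n) ℝ) : ℝ :=
  Real.sqrt (⨆ i, (show (Aᵀ * A).IsHermitian by
    simpa [Matrix.conjTranspose_eq_transpose_of_trivial] using
      Matrix.isHermitian_conjTranspose_mul_self A).eigenvalues i)

/-- Vector equivalence: `x ↔ y` iff `x ⊗ 1_α = y ⊗ 1_β` for some `α, β ≥ 1`. -/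
def VEquiv {m n : ℕ} (x : Fin m → ℝ) (y : Fin n → ℝ) : Prop :=
  ∃ (α β : ℕ), 0 < α ∧ 0 < β ∧
    ∃ h : m * α = n * β, ∀ i, vkron x α i = vkron y β (Fin.cast h i)

/-- Matrix equivalence: `A ∼ B` iff `A ⊗ I_α = B ⊗ I_β` for some `α, β ≥ 1`. -/
def MEquiv {m n p q : ℕ} (A : Matrix (Fin m) (Fin n) ℝ) (B : Matrix (Fin p) (Fin q) ℝ) : Prop :=
  ∃ (α β : ℕ), 0 < α ∧ 0 < β ∧
    ∃ (h1 : m * α = p * β) (h2 : n * α = q * β),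
      ∀ i j, mkron A α i j = mkron B β (Fin.cast h1 i) (Fin.cast h2 j)

/-- `R^r` is `A`-invariant: `A ⋉_V x ∈ R^r` for every `x ∈ R^r`. -/
def AInvariant {m n : ℕ} (A : Matrix (Fin m) (Fin n) ℝ) (r : ℕ) : Prop :=
  ∀ x : Fin r → ℝ, ∃ y : Fin r → ℝ,
    (⟨_, vprod A x⟩ : Σ k : ℕ, Fin k → ℝ) = ⟨r, y⟩

theorem Nat.lcm_div_dvd_iff {x y k : ℕ} (hx : 0 < x) : Nat.lcm x y / x ∣ k ↔ y ∣ x * k := by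
  rw [← Nat.mul_dvd_mul_iff_left hx, Nat.mul_div_cancel' (Nat.dvd_lcm_left x y), Nat.lcm_dvd_iff]
  exact and_iff_right (dvd_mul_right x k)

theorem Nat.mul_lcm_div_eq_mul_lcm_div (x y : ℕ) :
    x * (Nat.lcm x y / x) = y * (Nat.lcm x y / y) := by
  rw [Nat.mul_div_cancel' (Nat.dvd_lcm_left x y), Nat.mul_div_cancel' (Nat.dvd_lcm_right x y)]

/-- The paper's `M`. Equality in it compares matrices whose sizes agree only propositionally. -/
abbrev Mat (R : Type*) := Σ a b : ℕ, Matrix (Fin a) (Fin b) R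

section Mat

variable {R : Type*}

abbrev Mat.of {a b : ℕ} (M : Matrix (Fin a) (Fin b) R) : Mat R := ⟨a, b, M⟩

theorem Mat.of_submatrix_cast {a b a' b' : ℕ} (M : Matrix (Fin a) (Fin b) R) (ha : a' = a)
    (hb : b' = b) : Mat.of (M.submatrix (Fin.cast ha) (Fin.cast hb)) = Mat.of M := by
  subst ha hb; rfl

variable [Semiring R]

def castMul {a b c d : ℕ} (M : Matrix (Fin a) (Fin b) R) (N : Matrix (Fin c) (Fin d) R)
    (h : b = c) : Matrix (Fin a) (Fin d) R :=
  M * N.submatrix (Fin.cast h) id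

theorem Mat.of_castMul_congr {a b c d a' b' c' d' : ℕ}
    {M : Matrix (Fin a) (Fin b) R} {N : Matrix (Fin c) (Fin d) R}
    {M' : Matrix (Fin a') (Fin b') R} {N' : Matrix (Fin c') (Fin d') R}
    (hM : Mat.of M = Mat.of M') (hN : Mat.of N = Mat.of N') (h : b = c) (h' : b' = c') :
    Mat.of (castMul M N h) = Mat.of (castMul M' N' h') := by
  cases hM; cases hN; rfl

theorem castMul_assoc {a b b' c c' d : ℕ} (X : Matrix (Fin a) (Fin b) R)
    (Y : Matrix (Fin b') (Fin c) R) (Z : Matrix (Fin c') (Fin d) R) (hb : b = b') (hc : c = c') :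
    castMul (castMul X Y hb) Z hc = castMul X (castMul Y Z hc) hb := by
  subst hb hc; exact Matrix.mul_assoc X Y Z

theorem Mat.of_one_castMul {a c d : ℕ} (N : Matrix (Fin c) (Fin d) R) (h : a = c) :
    Mat.of (castMul (1 : Matrix (Fin a) (Fin a) R) N h) = Mat.of N := by
  subst h; simp [castMul]

theorem Mat.of_castMul_one {a b c : ℕ} (M : Matrix (Fin a) (Fin b) R) (h : b = c) :
    Mat.of (castMul M (1 : Matrix (Fin c) (Fin c) R) h) = Mat.of M := by
  subst h; simp [castMul]

end Mat

theorem mkron_apply {m n : ℕ} (A : Matrix (Fin m) (Fin n) ℝ) (s : ℕ) (i : Fin (m * s))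
    (j : Fin (n * s)) :
    mkron A s i j = A i.divNat j.divNat * (1 : Matrix (Fin s) (Fin s) ℝ) i.modNat j.modNat :=
  rfl

theorem mkron_castMul {a b c d : ℕ} (M : Matrix (Fin a) (Fin b) ℝ) (N : Matrix (Fin c) (Fin d) ℝ)
    (h : b = c) (s : ℕ) :
    mkron (castMul M N h) s = castMul (mkron M s) (mkron N s) (by rw [h]) := by
  subst h
  simp only [castMul, Fin.cast_refl, submatrix_id_id, mkron, reindex_apply]
  rw [submatrix_mul_equiv _ _ _ finProdFinEquiv.symm, ← mul_kronecker_mul, Matrix.one_mul]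

theorem Fin.divNat_cast_mul_assoc {m s t : ℕ} (i : Fin (m * s * t)) :
    (Fin.cast (mul_assoc m s t) i).divNat = i.divNat.divNat := by
  ext; simp [Fin.coe_divNat, Nat.div_div_eq_div_mul, mul_comm s t]

theorem Fin.modNat_cast_mul_assoc {m s t : ℕ} (i : Fin (m * s * t)) :
    (Fin.cast (mul_assoc m s t) i).modNat = finProdFinEquiv (i.divNat.modNat, i.modNat) := by
  ext; simp [Fin.coe_modNat, Fin.coe_divNat, mul_comm s t, Nat.mod_mul]

theorem one_apply_finProdFinEquiv {R : Type*} [MulZeroOneClass R] {s t : ℕ}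
    (x y : Fin s × Fin t) :
    (1 : Matrix (Fin (s * t)) (Fin (s * t)) R) (finProdFinEquiv x) (finProdFinEquiv y)
      = (1 : Matrix (Fin s) (Fin s) R) x.1 y.1 * (1 : Matrix (Fin t) (Fin t) R) x.2 y.2 := by
  simp only [one_apply, EmbeddingLike.apply_eq_iff_eq, Prod.ext_iff]
  split_ifs <;> simp_all

theorem mkron_mkron {m n : ℕ} (A : Matrix (Fin m) (Fin n) ℝ) (s t : ℕ) :
    Mat.of (mkron (mkron A s) t) = Mat.of (mkron A (s * t)) := by
  rw [← Mat.of_submatrix_cast (mkron A (s * t)) (mul_assoc m s t) (mul_assoc n s t)]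
  congr 3
  ext i j
  simp only [mkron_apply, submatrix_apply, Fin.divNat_cast_mul_assoc]
  rw [Fin.modNat_cast_mul_assoc, Fin.modNat_cast_mul_assoc, one_apply_finProdFinEquiv, mul_assoc]

theorem Mat.of_mkron_one {m n : ℕ} (A : Matrix (Fin m) (Fin n) ℝ) :
    Mat.of (mkron A 1) = Mat.of A := by
  rw [← Mat.of_submatrix_cast A (mul_one m) (mul_one n)]
  congr 3
  ext i j
  rw [mkron_apply, Subsingleton.elim i.modNat j.modNat, one_apply_eq, mul_one]
  congr 1 <;> ext <;> simp [Fin.coe_divNat]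

theorem mkron_one (k s : ℕ) : mkron (1 : Matrix (Fin k) (Fin k) ℝ) s = 1 := by
  rw [mkron, one_kronecker_one, reindex_apply, submatrix_one_equiv]

theorem stp_eq_castMul {m n p q : ℕ} (A : Matrix (Fin m) (Fin n) ℝ)
    (B : Matrix (Fin p) (Fin q) ℝ) :
    stp A B = castMul (mkron A (Nat.lcm n p / n)) (mkron B (Nat.lcm n p / p))
      (Nat.mul_lcm_div_eq_mul_lcm_div n p) :=
  rfl

theorem one_stp {m n : ℕ} (hm : 0 < m) (A : Matrix (Fin m) (Fin n) ℝ) :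
    Mat.of (stp (1 : Matrix (Fin 1) (Fin 1) ℝ) A) = Mat.of A := by
  have hβ : Nat.lcm 1 m / m = 1 := by rw [Nat.lcm_one_left, Nat.div_self hm]
  rw [stp_eq_castMul, mkron_one, Mat.of_one_castMul, hβ, Mat.of_mkron_one]

theorem stp_one {m n : ℕ} (hn : 0 < n) (A : Matrix (Fin m) (Fin n) ℝ) :
    Mat.of (stp A (1 : Matrix (Fin 1) (Fin 1) ℝ)) = Mat.of A := by
  have hα : Nat.lcm n 1 / n = 1 := by rw [Nat.lcm_one_right, Nat.div_self hn]
  rw [stp_eq_castMul, mkron_one, Mat.of_castMul_one, hα, Mat.of_mkron_one]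

theorem Mat.of_mkron_stp {m n p q : ℕ} (A : Matrix (Fin m) (Fin n) ℝ)
    (B : Matrix (Fin p) (Fin q) ℝ) (s : ℕ) :
    Mat.of (mkron (stp A B) s)
      = Mat.of (castMul (mkron A (Nat.lcm n p / n * s)) (mkron B (Nat.lcm n p / p * s))
          (by rw [← mul_assoc, ← mul_assoc, Nat.mul_lcm_div_eq_mul_lcm_div])) := by
  rw [stp_eq_castMul, mkron_castMul]
  exact Mat.of_castMul_congr (mkron_mkron A _ s) (mkron_mkron B _ s) _ _

theorem Mat.of_castMul_castMul_mkron_congr {m n p q u v a b c a' b' c' : ℕ}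
    (hn : 0 < n) (hu : 0 < u) (A : Matrix (Fin m) (Fin n) ℝ) (B : Matrix (Fin p) (Fin q) ℝ)
    (C : Matrix (Fin u) (Fin v) ℝ) (h₁ : n * a = p * b) (h₂ : q * b = u * c)
    (h₁' : n * a' = p * b') (h₂' : q * b' = u * c') (hb : b = b') :
    Mat.of (castMul (castMul (mkron A a) (mkron B b) h₁) (mkron C c) h₂)
      = Mat.of (castMul (castMul (mkron A a') (mkron B b') h₁') (mkron C c') h₂') := by
  subst hb
  obtain rfl : a = a' := Nat.eq_of_mul_eq_mul_left hn (h₁.trans h₁'.symm)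
  obtain rfl : c = c' := Nat.eq_of_mul_eq_mul_left hu (h₂.symm.trans h₂')
  rfl

/-- The exponents of `B` in `(A ⋉ B) ⋉ C` and in `A ⋉ (B ⋉ C)` agree: multiplied by `p`, both
are `lcm(n, p · lcm(q, u) / q)`. -/
theorem stp_assoc_exponent {n p q u : ℕ} (hn : 0 < n) (hp : 0 < p) (hq : 0 < q) :
    Nat.lcm n p / p * (Nat.lcm (q * (Nat.lcm n p / p)) u / (q * (Nat.lcm n p / p)))
      = Nat.lcm q u / q * (Nat.lcm n (p * (Nat.lcm q u / q)) / (p * (Nat.lcm q u / q))) := by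
  set β := Nat.lcm n p / p with hβ
  set w := Nat.lcm q u / q
  have hpβ : p * β = Nat.lcm n p := Nat.mul_div_cancel' (Nat.dvd_lcm_right n p)
  have hβ_pos : 0 < β := Nat.pos_of_mul_pos_left (hpβ ▸ Nat.lcm_pos hn hp)
  apply Nat.eq_of_mul_eq_mul_left hp
  rw [← mul_assoc p w, Nat.mul_div_cancel' (Nat.dvd_lcm_right _ _)]
  apply Nat.dvd_antisymm
  · obtain ⟨z, hz⟩ : p ∣ Nat.lcm n (p * w) := (dvd_mul_right p w).trans (Nat.dvd_lcm_right _ _)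
    obtain ⟨z, rfl⟩ : β ∣ z := by
      rw [hβ, Nat.lcm_comm, Nat.lcm_div_dvd_iff hp, ← hz]; exact Nat.dvd_lcm_left _ _
    have hw : w ∣ β * z := (Nat.mul_dvd_mul_iff_left hp).1 (hz ▸ Nat.dvd_lcm_right _ _)
    rw [hz]
    refine mul_dvd_mul_left p (mul_dvd_mul_left β ?_)
    rwa [Nat.lcm_div_dvd_iff (Nat.mul_pos hq hβ_pos), mul_assoc, ← Nat.lcm_div_dvd_iff hq]
  · refine Nat.lcm_dvd ?_ (mul_dvd_mul_left p ?_)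
    · rw [← mul_assoc, hpβ]; exact (Nat.dvd_lcm_left n p).mul_right _
    · rw [Nat.lcm_div_dvd_iff hq, ← mul_assoc, Nat.mul_div_cancel' (Nat.dvd_lcm_left _ _)]
      exact Nat.dvd_lcm_right _ _

theorem stp_assoc {m n p q u v : ℕ} (hn : 0 < n) (hp : 0 < p) (hq : 0 < q) (hu : 0 < u)
    (A : Matrix (Fin m) (Fin n) ℝ) (B : Matrix (Fin p) (Fin q) ℝ) (C : Matrix (Fin u) (Fin v) ℝ) :
    Mat.of (stp (stp A B) C) = Mat.of (stp A (stp B C)) := by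
  rw [stp_eq_castMul (stp A B), stp_eq_castMul A (stp B C)]
  refine (Mat.of_castMul_congr (Mat.of_mkron_stp A B _) rfl _ ?_).trans
    (.trans ?_ (Mat.of_castMul_congr rfl (Mat.of_mkron_stp B C _) _ ?_).symm)
  · rw [← mul_assoc, Nat.mul_lcm_div_eq_mul_lcm_div]
  · rw [← castMul_assoc]
    exact Mat.of_castMul_castMul_mkron_congr hn hu A B C _ _ _ _ (stp_assoc_exponent hn hp hq)
  · rw [← mul_assoc, Nat.mul_lcm_div_eq_mul_lcm_div]

/-- matrices of arbitrary positive dimensions form a monoid under the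
semi-tensor product, with identity the `1×1` matrix `[1]`. -/
theorem stp_monoid :
    (∀ (m n p q u v : ℕ), 0 < m → 0 < n → 0 < p → 0 < q → 0 < u → 0 < v →
      ∀ (A : Matrix (Fin m) (Fin n) ℝ) (B : Matrix (Fin p) (Fin q) ℝ)
        (C : Matrix (Fin u) (Fin v) ℝ),
        (⟨_, _, stp (stp A B) C⟩ : Σ a b : ℕ, Matrix (Fin a) (Fin b) ℝ)
          = ⟨_, _, stp A (stp B C)⟩) ∧
    (∀ (m n : ℕ), 0 < m → 0 < n → ∀ A : Matrix (Fin m) (Fin n) ℝ,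
      (⟨_, _, stp (Matrix.of fun (_ : Fin 1) (_ : Fin 1) => (1 : ℝ)) A⟩ :
          Σ a b : ℕ, Matrix (Fin a) (Fin b) ℝ) = ⟨m, n, A⟩ ∧
      (⟨_, _, stp A (Matrix.of fun (_ : Fin 1) (_ : Fin 1) => (1 : ℝ))⟩ :
          Σ a b : ℕ, Matrix (Fin a) (Fin b) ℝ) = ⟨m, n, A⟩) := by
  have hunit : (Matrix.of fun (_ : Fin 1) (_ : Fin 1) => (1 : ℝ)) = 1 := by
    ext i j; rw [Subsingleton.elim i j, one_apply_eq]; rfl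
  refine ⟨fun m n p q u v _ hn hp hq hu _ A B C => stp_assoc hn hp hq hu A B C,
    fun m n hm hn A => ⟨?_, ?_⟩⟩
  · rw [hunit]; exact one_stp hm A
  · rw [hunit]; exact stp_one hn A
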